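/- If (2k−3) α (1−α)^{−(k−2)/(k−1)} < 1, then the MLPPR system (e^T y)^{k-2} y − α P̄ y^{k-1} = v has a unique nonnegative solution in Δ. -/

import Mathlib

/-!
Write `m = k - 2`, `M = (1 - α)^(-1/(m+1))` and `g(y) = α P̄ y^(m+1) + v`. Since `eᵀ g(y) ≥ 1`,
the solutions in `Δ` are exactly the fixed points of `Φ(y) = (eᵀ g(y))^(-m/(m+1)) g(y)`, and
`eᵀ Φ(y) = (eᵀ g(y))^(1/(m+1)) ≤ (1 + α M^(m+1))^(1/(m+1)) = M`, so `Φ` maps `Δ` into itself.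
In the ℓ¹ metric, `y ↦ P̄ y^(m+1)` is `(m+1) M^m`-Lipschitz on `Δ` (peel off one factor of the
products at a time; `P̄` is columnwise substochastic), and `x ↦ (eᵀ x)^(-β) x` is
`(1+β)`-Lipschitz on `{x ≥ 0, eᵀ x ≥ 1}` (by `1 - r^(-β) ≤ β (r - 1)`). So `Φ` is a contraction
of `Δ` with constant `(1 + m/(m+1)) (m+1) α M^m = (2k-3) α (1-α)^(-(k-2)/(k-1)) < 1`, and
Banach's theorem applies.
-/

open Finset Real

noncomputable def contr {n m : ℕ} (P : Fin n → (Fin m → Fin n) → ℝ) (y : Fin n → ℝ) : Fin n → ℝ :=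
  fun i => ∑ j : Fin m → Fin n, P i j * ∏ s, y (j s)

lemma one_sub_rpow_neg_le {β r : ℝ} (hβ : 0 ≤ β) (hr : 0 < r) : 1 - r ^ (-β) ≤ β * (r - 1) := by
  have hexp : 1 - β * Real.log r ≤ r ^ (-β) := by
    rw [Real.rpow_def_of_pos hr]
    linarith [Real.add_one_le_exp (Real.log r * -β)]
  have hlog : β * Real.log r ≤ β * (r - 1) :=
    mul_le_mul_of_nonneg_left (Real.log_le_sub_one_of_pos hr) hβ
  linarith

lemma rpow_neg_sub_rpow_neg_mul_le {β a b : ℝ} (hβ : 0 ≤ β) (ha : 1 ≤ a) (hab : a ≤ b) :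
    (a ^ (-β) - b ^ (-β)) * a ≤ β * (b - a) := by
  have ha0 : 0 < a := by linarith
  have hpow0 : 0 < a ^ (-β) := Real.rpow_pos_of_pos ha0 _
  have hpow1 : a ^ (-β) ≤ 1 := Real.rpow_le_one_of_one_le_of_nonpos ha (by linarith)
  have hb : b ^ (-β) = a ^ (-β) * (b / a) ^ (-β) := by
    rw [Real.div_rpow (by linarith) ha0.le, mul_div_cancel₀ _ hpow0.ne']
  calc (a ^ (-β) - b ^ (-β)) * a = a ^ (-β) * ((1 - (b / a) ^ (-β)) * a) := by rw [hb]; ring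
    _ ≤ a ^ (-β) * (β * (b / a - 1) * a) := by
        gcongr
        exact one_sub_rpow_neg_le hβ (div_pos (by linarith) ha0)
    _ = a ^ (-β) * (β * (b - a)) := by field_simp
    _ ≤ β * (b - a) := mul_le_of_le_one_left (mul_nonneg hβ (by linarith)) hpow1

lemma rpow_neg_mul_pow_eq_one {s : ℝ} (hs : 0 < s) (m : ℕ) :
    (s ^ (m + 1)) ^ (-(m / (m + 1) : ℝ)) * s ^ m = 1 := by
  rw [← Real.rpow_natCast, ← Real.rpow_mul hs.le, ← Real.rpow_natCast s m, ← Real.rpow_add hs]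
  convert Real.rpow_zero s
  push_cast
  field_simp
  ring

section Normalization

variable {ι : Type*} [Fintype ι]

lemma sum_abs_rpow_mul_sub_le_of_sum_le {β : ℝ} (hβ : 0 ≤ β) {x y : ι → ℝ}
    (hx : ∀ i, 0 ≤ x i) (hx1 : 1 ≤ ∑ i, x i) (hxy : ∑ i, x i ≤ ∑ i, y i) :
    ∑ i, |(∑ j, x j) ^ (-β) * x i - (∑ j, y j) ^ (-β) * y i| ≤ (1 + β) * ∑ i, |x i - y i| := by
  set a := ∑ j, x j
  set b := ∑ j, y j
  set D := ∑ i, |x i - y i|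
  have hb0 : 0 ≤ b ^ (-β) := Real.rpow_nonneg (by linarith) _
  have hb1 : b ^ (-β) ≤ 1 := Real.rpow_le_one_of_one_le_of_nonpos (by linarith) (by linarith)
  have hab : b ^ (-β) ≤ a ^ (-β) := Real.rpow_le_rpow_of_nonpos (by linarith) hxy (by linarith)
  have hba : b - a ≤ D := by
    rw [← sum_sub_distrib]
    exact sum_le_sum fun i _ => abs_sub_comm (x i) (y i) ▸ le_abs_self _
  calc ∑ i, |a ^ (-β) * x i - b ^ (-β) * y i|
      ≤ ∑ i, (b ^ (-β) * |x i - y i| + (a ^ (-β) - b ^ (-β)) * x i) := by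
        gcongr with i
        rw [show a ^ (-β) * x i - b ^ (-β) * y i
            = b ^ (-β) * (x i - y i) + (a ^ (-β) - b ^ (-β)) * x i by ring]
        refine (abs_add_le _ _).trans_eq ?_
        rw [abs_mul, abs_mul, abs_of_nonneg hb0, abs_of_nonneg (sub_nonneg.2 hab),
          abs_of_nonneg (hx i)]
    _ = b ^ (-β) * D + (a ^ (-β) - b ^ (-β)) * a := by
        rw [sum_add_distrib, ← mul_sum, ← mul_sum]
    _ ≤ 1 * D + β * D :=
        add_le_add (mul_le_mul_of_nonneg_right hb1 (sum_nonneg fun _ _ => abs_nonneg _))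
          ((rpow_neg_sub_rpow_neg_mul_le hβ hx1 hxy).trans (mul_le_mul_of_nonneg_left hba hβ))
    _ = (1 + β) * D := by ring

lemma sum_abs_rpow_mul_sub_le {β : ℝ} (hβ : 0 ≤ β) {x y : ι → ℝ}
    (hx : ∀ i, 0 ≤ x i) (hy : ∀ i, 0 ≤ y i) (hx1 : 1 ≤ ∑ i, x i) (hy1 : 1 ≤ ∑ i, y i) :
    ∑ i, |(∑ j, x j) ^ (-β) * x i - (∑ j, y j) ^ (-β) * y i| ≤ (1 + β) * ∑ i, |x i - y i| := by
  rcases le_total (∑ i, x i) (∑ i, y i) with hxy | hyx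
  · exact sum_abs_rpow_mul_sub_le_of_sum_le hβ hx hx1 hxy
  · simpa only [abs_sub_comm] using sum_abs_rpow_mul_sub_le_of_sum_le hβ hy hy1 hyx

lemma sum_pow_mul_eq_iff {m : ℕ} {g y : ι → ℝ} (hg : 0 < ∑ i, g i) (hy : 0 ≤ ∑ i, y i) :
    (∀ i, (∑ j, y j) ^ m * y i = g i) ↔ ∀ i, (∑ j, g j) ^ (-(m / (m + 1) : ℝ)) * g i = y i := by
  set s := ∑ j, y j
  set σ := ∑ j, g j
  have key (hs : 0 < s) (hσs : σ = s ^ (m + 1)) : σ ^ (-(m / (m + 1) : ℝ)) * s ^ m = 1 := by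
    rw [hσs, rpow_neg_mul_pow_eq_one hs m]
  constructor
  · intro h i
    have hσs : σ = s ^ (m + 1) := by
      simp only [σ, ← h, ← mul_sum]
      rw [pow_succ]
    have hs : 0 < s := hy.lt_of_ne fun hs => by
      rw [hσs, ← hs, zero_pow m.succ_ne_zero] at hg
      exact hg.false
    rw [← h i, ← mul_assoc, key hs hσs, one_mul]
  · intro h i
    have hs : s = σ ^ ((m : ℝ) + 1)⁻¹ := by
      simp only [s, ← h, ← mul_sum]
      rw [← Real.rpow_add_one hg.ne']
      congr 1
      field_simp
      ring
    have hσs : σ = s ^ (m + 1) := by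
      rw [hs, ← Real.rpow_mul_natCast hg.le]
      push_cast
      rw [inv_mul_cancel₀ (by positivity), Real.rpow_one]
    rw [← h i, ← mul_assoc, mul_comm (s ^ m), key (hs ▸ Real.rpow_pos_of_pos hg _) hσs, one_mul]

end Normalization

lemma sum_abs_prod_sub_prod_le {ι : Type*} [Fintype ι] {M : ℝ} (hM : 0 ≤ M) {y z : ι → ℝ}
    (hy : ∀ i, 0 ≤ y i) (hz : ∀ i, 0 ≤ z i) (hyM : ∑ i, y i ≤ M) (hzM : ∑ i, z i ≤ M) (m : ℕ) :
    ∑ j : Fin m → ι, |∏ s, y (j s) - ∏ s, z (j s)| ≤ m * M ^ (m - 1) * ∑ i, |y i - z i| := by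
  induction m with
  | zero => simp
  | succ m ih =>
    set D := ∑ i, |y i - z i|
    have hZ : ∀ j : Fin m → ι, 0 ≤ ∏ s, z (j s) := fun j => prod_nonneg fun s _ => hz _
    calc ∑ j : Fin (m + 1) → ι, |∏ s, y (j s) - ∏ s, z (j s)|
        = ∑ i, ∑ j : Fin m → ι, |y i * ∏ s, y (j s) - z i * ∏ s, z (j s)| := by
          rw [← (Fin.consEquiv fun _ => ι).sum_comp, Fintype.sum_prod_type]
          simp [Fin.prod_univ_succ]
      _ ≤ ∑ i, ∑ j : Fin m → ι,
            (|y i - z i| * ∏ s, z (j s) + y i * |∏ s, y (j s) - ∏ s, z (j s)|) := by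
          gcongr with i _ j _
          rw [show y i * ∏ s, y (j s) - z i * ∏ s, z (j s)
              = (y i - z i) * ∏ s, z (j s) + y i * (∏ s, y (j s) - ∏ s, z (j s)) by ring]
          refine (abs_add_le _ _).trans_eq ?_
          rw [abs_mul, abs_mul, abs_of_nonneg (hZ j), abs_of_nonneg (hy i)]
      _ = D * (∑ i, z i) ^ m + (∑ i, y i) * ∑ j : Fin m → ι, |∏ s, y (j s) - ∏ s, z (j s)| := by
          simp only [sum_add_distrib, ← mul_sum, ← sum_mul, Fintype.sum_pow]
          rfl
      _ ≤ D * M ^ m + M * (m * M ^ (m - 1) * D) := by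
          gcongr
          exact sum_nonneg fun i _ => hz i
      _ = (m + 1 : ℕ) * M ^ (m + 1 - 1) * D := by
          rcases Nat.eq_zero_or_pos m with rfl | hm
          · simp
          · rw [Nat.add_sub_cancel, ← mul_pow_sub_one hm.ne' M]
            push_cast
            ring

lemma sum_sum_mul_le_sum {ι κ : Type*} [Fintype ι] [Fintype κ] {P : ι → κ → ℝ}
    (hPs : ∀ j, ∑ i, P i j ≤ 1) {f : κ → ℝ} (hf : ∀ j, 0 ≤ f j) :
    ∑ i, ∑ j, P i j * f j ≤ ∑ j, f j := by
  rw [sum_comm]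
  gcongr with j
  rw [← sum_mul]
  exact mul_le_of_le_one_left (hf j) (hPs j)

theorem existsUnique_fixedPoint_of_sum_abs_sub_le {ι : Type*} [Fintype ι] {s : Set (ι → ℝ)}
    (hs : IsClosed s) {x₀ : ι → ℝ} (hx₀ : x₀ ∈ s) {f : (ι → ℝ) → ι → ℝ} (hf : Set.MapsTo f s s)
    {K : ℝ} (hK : K < 1)
    (hfK : ∀ x ∈ s, ∀ y ∈ s, ∑ i, |f x i - f y i| ≤ K * ∑ i, |x i - y i|) :
    ∃! x, x ∈ s ∧ f x = x := by
  -- `ι → ℝ` carries the sup metric; the contraction is for the ℓ¹ metric of `PiLp 1`.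
  let F : PiLp 1 (fun _ : ι => ℝ) → PiLp 1 (fun _ : ι => ℝ) := fun x => WithLp.toLp 1 (f x.ofLp)
  let t : Set (PiLp 1 (fun _ : ι => ℝ)) := WithLp.ofLp ⁻¹' s
  have hFt : Set.MapsTo F t t := fun x hx => by simpa [F, t] using hf hx
  have hFK : ContractingWith K.toNNReal (hFt.restrict F t t) := by
    refine ⟨Real.toNNReal_lt_one.2 hK, LipschitzWith.of_dist_le_mul fun x y => ?_⟩
    simp only [Subtype.dist_eq, Set.MapsTo.val_restrict_apply, PiLp.dist_eq_of_L1, Real.dist_eq,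
      Real.coe_toNNReal']
    exact (hfK _ x.2 _ y.2).trans
      (mul_le_mul_of_nonneg_right (le_max_left _ _) (sum_nonneg fun _ _ => abs_nonneg _))
  have htc : IsComplete t := (hs.preimage (PiLp.continuous_ofLp 1 _)).isComplete
  obtain ⟨x, hxt, hx, -⟩ :=
    hFK.exists_fixedPoint' htc hFt (x := WithLp.toLp 1 x₀) hx₀ (edist_ne_top _ _)
  have hxf : f x.ofLp = x.ofLp := congrArg WithLp.ofLp hx
  refine ⟨x.ofLp, ⟨hxt, hxf⟩, fun y ⟨hys, hy⟩ => ?_⟩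
  have hD := hfK _ hys _ hxt
  rw [hy, hxf] at hD
  have hD0 : ∑ i, |y i - x.ofLp i| = 0 := by
    have := sum_nonneg fun i (_ : i ∈ Finset.univ) => abs_nonneg (y i - x.ofLp i)
    nlinarith
  funext i
  rw [sum_eq_zero_iff_of_nonneg fun _ _ => abs_nonneg _] at hD0
  exact sub_eq_zero.1 (abs_eq_zero.1 (hD0 i (Finset.mem_univ i)))

section Contr

variable {n m : ℕ} {P : Fin n → (Fin m → Fin n) → ℝ}

lemma contr_nonneg (hP0 : ∀ i j, 0 ≤ P i j) {y : Fin n → ℝ} (hy : ∀ i, 0 ≤ y i) (i : Fin n) :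
    0 ≤ contr P y i :=
  sum_nonneg fun j _ => mul_nonneg (hP0 i j) (prod_nonneg fun _ _ => hy _)

lemma sum_contr_le (hPs : ∀ j, ∑ i, P i j ≤ 1) {y : Fin n → ℝ}
    (hy : ∀ i, 0 ≤ y i) : ∑ i, contr P y i ≤ (∑ i, y i) ^ m :=
  (sum_sum_mul_le_sum hPs fun _ => prod_nonneg fun _ _ => hy _).trans_eq
    (Fintype.sum_pow _ _).symm

lemma sum_abs_contr_sub_le (hP0 : ∀ i j, 0 ≤ P i j) (hPs : ∀ j, ∑ i, P i j ≤ 1) {M : ℝ}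
    (hM : 0 ≤ M) {y z : Fin n → ℝ} (hy : ∀ i, 0 ≤ y i) (hz : ∀ i, 0 ≤ z i)
    (hyM : ∑ i, y i ≤ M) (hzM : ∑ i, z i ≤ M) :
    ∑ i, |contr P y i - contr P z i| ≤ m * M ^ (m - 1) * ∑ i, |y i - z i| :=
  calc ∑ i, |contr P y i - contr P z i|
      ≤ ∑ i, ∑ j, P i j * |∏ s, y (j s) - ∏ s, z (j s)| := by
        refine sum_le_sum fun i _ => ?_
        simp only [contr, ← sum_sub_distrib, ← mul_sub]
        refine (abs_sum_le_sum_abs _ _).trans_eq (sum_congr rfl fun j _ => ?_)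
        rw [abs_mul, abs_of_nonneg (hP0 i j)]
    _ ≤ ∑ j : Fin m → Fin n, |∏ s, y (j s) - ∏ s, z (j s)| :=
        sum_sum_mul_le_sum hPs fun _ => abs_nonneg _
    _ ≤ m * M ^ (m - 1) * ∑ i, |y i - z i| := sum_abs_prod_sub_prod_le hM hy hz hyM hzM m

end Contr

/- `rhs y = g(y)`, `phi = Φ`, and the tensor `P` has order `m + 1 = k - 1`. -/
namespace MLPPR

def Δ {n : ℕ} (M : ℝ) : Set (Fin n → ℝ) := {y | (∀ i, 0 ≤ y i) ∧ ∑ i, y i ≤ M}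

lemma isClosed_Δ {n : ℕ} (M : ℝ) : IsClosed (Δ (n := n) M) := by
  simp only [Δ, Set.ofPred_and, Set.ofPred_forall]
  exact (isClosed_iInter fun i => isClosed_le continuous_const (continuous_apply i)).inter
    (isClosed_le (continuous_finsetSum _ fun i _ => continuous_apply i) continuous_const)

variable {n m : ℕ} (P : Fin n → (Fin (m + 1) → Fin n) → ℝ) (v : Fin n → ℝ) (α : ℝ)

noncomputable def rhs (y : Fin n → ℝ) : Fin n → ℝ := fun i => α * contr P y i + v i

noncomputable def phi (y : Fin n → ℝ) : Fin n → ℝ :=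
  fun i => (∑ j, rhs P v α y j) ^ (-(m / (m + 1) : ℝ)) * rhs P v α y i

variable {P v α}

lemma rhs_nonneg (hP0 : ∀ i j, 0 ≤ P i j) (hv0 : ∀ i, 0 ≤ v i) (hα0 : 0 ≤ α) {y : Fin n → ℝ}
    (hy : ∀ i, 0 ≤ y i) (i : Fin n) : 0 ≤ rhs P v α y i :=
  add_nonneg (mul_nonneg hα0 (contr_nonneg hP0 hy i)) (hv0 i)

lemma sum_rhs (hv1 : ∑ i, v i = 1) (y : Fin n → ℝ) :
    ∑ i, rhs P v α y i = α * ∑ i, contr P y i + 1 := by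
  simp only [rhs, sum_add_distrib, ← mul_sum, hv1]

lemma one_le_sum_rhs (hP0 : ∀ i j, 0 ≤ P i j) (hv1 : ∑ i, v i = 1) (hα0 : 0 ≤ α)
    {y : Fin n → ℝ} (hy : ∀ i, 0 ≤ y i) : 1 ≤ ∑ i, rhs P v α y i := by
  rw [sum_rhs hv1]
  exact le_add_of_nonneg_left (mul_nonneg hα0 (sum_nonneg fun i _ => contr_nonneg hP0 hy i))

lemma sum_rhs_le (hPs : ∀ j, ∑ i, P i j ≤ 1) (hv1 : ∑ i, v i = 1) (hα0 : 0 ≤ α)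
    {y : Fin n → ℝ} (hy : ∀ i, 0 ≤ y i) : ∑ i, rhs P v α y i ≤ α * (∑ i, y i) ^ (m + 1) + 1 := by
  rw [sum_rhs hv1]
  gcongr
  exact sum_contr_le hPs hy

lemma sum_phi {y : Fin n → ℝ} (hσ : 0 < ∑ i, rhs P v α y i) :
    ∑ i, phi P v α y i = (∑ i, rhs P v α y i) ^ ((m + 1 : ℝ)⁻¹) := by
  simp only [phi, ← mul_sum]
  rw [← Real.rpow_add_one hσ.ne']
  congr 1
  field_simp
  ring

lemma mapsTo_phi (hP0 : ∀ i j, 0 ≤ P i j) (hPs : ∀ j, ∑ i, P i j ≤ 1) (hv0 : ∀ i, 0 ≤ v i)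
    (hv1 : ∑ i, v i = 1) (hα0 : 0 ≤ α) {M : ℝ} (hM0 : 0 ≤ M)
    (hM : α * M ^ (m + 1) + 1 ≤ M ^ (m + 1)) : Set.MapsTo (phi P v α) (Δ M) (Δ M) := by
  rintro y ⟨hy, hyM⟩
  have hσ := one_le_sum_rhs hP0 hv1 hα0 hy
  refine ⟨fun i => mul_nonneg (Real.rpow_nonneg (by linarith) _) (rhs_nonneg hP0 hv0 hα0 hy i), ?_⟩
  calc ∑ i, phi P v α y i = (∑ i, rhs P v α y i) ^ ((m + 1 : ℝ)⁻¹) := sum_phi (by linarith)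
    _ ≤ (M ^ (m + 1)) ^ ((m + 1 : ℝ)⁻¹) := by
        gcongr
        calc ∑ i, rhs P v α y i ≤ α * (∑ i, y i) ^ (m + 1) + 1 := sum_rhs_le hPs hv1 hα0 hy
          _ ≤ α * M ^ (m + 1) + 1 := by gcongr; exact sum_nonneg fun i _ => hy i
          _ ≤ M ^ (m + 1) := hM
    _ = M := by exact_mod_cast Real.pow_rpow_inv_natCast hM0 m.succ_ne_zero

lemma phi_eq_self_iff (hP0 : ∀ i j, 0 ≤ P i j) (hv1 : ∑ i, v i = 1) (hα0 : 0 ≤ α)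
    {y : Fin n → ℝ} (hy : ∀ i, 0 ≤ y i) :
    phi P v α y = y ↔ ∀ i, (∑ l, y l) ^ m * y i - α * contr P y i = v i := by
  have hσ : 0 < ∑ i, rhs P v α y i := by linarith [one_le_sum_rhs hP0 hv1 hα0 hy]
  simp only [funext_iff, phi]
  rw [← sum_pow_mul_eq_iff hσ (sum_nonneg fun i _ => hy i)]
  simp only [rhs, sub_eq_iff_eq_add']

lemma sum_abs_phi_sub_le (hP0 : ∀ i j, 0 ≤ P i j) (hPs : ∀ j, ∑ i, P i j ≤ 1)
    (hv0 : ∀ i, 0 ≤ v i) (hv1 : ∑ i, v i = 1) (hα0 : 0 ≤ α) {M : ℝ} (hM0 : 0 ≤ M)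
    {y z : Fin n → ℝ} (hy : y ∈ Δ M) (hz : z ∈ Δ M) :
    ∑ i, |phi P v α y i - phi P v α z i| ≤ (2 * m + 1) * α * M ^ m * ∑ i, |y i - z i| := by
  have hβ : (0 : ℝ) ≤ m / (m + 1) := by positivity
  calc ∑ i, |phi P v α y i - phi P v α z i|
      ≤ (1 + m / (m + 1)) * ∑ i, |rhs P v α y i - rhs P v α z i| :=
        sum_abs_rpow_mul_sub_le hβ (rhs_nonneg hP0 hv0 hα0 hy.1) (rhs_nonneg hP0 hv0 hα0 hz.1)
          (one_le_sum_rhs hP0 hv1 hα0 hy.1) (one_le_sum_rhs hP0 hv1 hα0 hz.1)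
    _ = (1 + m / (m + 1)) * α * ∑ i, |contr P y i - contr P z i| := by
        simp only [rhs, add_sub_add_right_eq_sub, ← mul_sub, abs_mul, abs_of_nonneg hα0, mul_sum,
          mul_assoc]
    _ ≤ (1 + m / (m + 1)) * α * ((m + 1 : ℕ) * M ^ (m + 1 - 1) * ∑ i, |y i - z i|) := by
        gcongr
        exact sum_abs_contr_sub_le hP0 hPs hM0 hy.1 hz.1 hy.2 hz.2
    _ = (2 * m + 1) * α * M ^ m * ∑ i, |y i - z i| := by
        push_cast
        field_simp
        ring

end MLPPR

theorem mlppr_uniqueness_general (n k : ℕ) (hk : 2 ≤ k)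
    (P : Fin n → (Fin (k-1) → Fin n) → ℝ)
    (hP0 : ∀ i j, 0 ≤ P i j) (hPs : ∀ j, ∑ i, P i j ≤ 1)
    (v : Fin n → ℝ) (hv0 : ∀ i, 0 ≤ v i) (hv1 : ∑ i, v i = 1)
    (α : ℝ) (hα0 : 0 ≤ α) (hα1 : α < 1)
    (hς : (2*(k:ℝ)-3) * α * (1 - α) ^ (-((k:ℝ)-2)/((k:ℝ)-1)) < 1) :
    ∃! y : Fin n → ℝ, (∀ i, 0 ≤ y i) ∧ ∑ i, y i ≤ (1 - α) ^ (-(1:ℝ)/((k:ℝ)-1)) ∧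
      ∀ i, (∑ l, y l) ^ (k-2) * y i - α * contr P y i = v i := by
  obtain ⟨m, rfl⟩ : ∃ m, k = m + 2 := ⟨k - 2, by omega⟩
  have e1 : ((m + 2 : ℕ) : ℝ) - 1 = m + 1 := by push_cast; ring
  have e2 : ((m + 2 : ℕ) : ℝ) - 2 = m := by push_cast; ring
  have e3 : 2 * ((m + 2 : ℕ) : ℝ) - 3 = 2 * m + 1 := by push_cast; ring
  rw [e1, e2, e3] at hς
  simp only [e1, Nat.add_sub_cancel]
  set M := (1 - α) ^ (-(1:ℝ) / (m + 1))
  have h1α : 0 < 1 - α := by linarith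
  have hM1 : 1 ≤ M := Real.one_le_rpow_of_pos_of_le_one_of_nonpos h1α (by linarith)
    (div_nonpos_of_nonpos_of_nonneg (by norm_num) (by positivity))
  have hMpow : M ^ (m + 1) = (1 - α)⁻¹ := by
    rw [← Real.rpow_mul_natCast h1α.le, ← Real.rpow_neg_one]
    congr 1
    push_cast
    field_simp
  have hMm : M ^ m = (1 - α) ^ (-(m : ℝ) / (m + 1)) := by
    rw [← Real.rpow_mul_natCast h1α.le]
    congr 1
    ring
  have hMα : α * M ^ (m + 1) + 1 ≤ M ^ (m + 1) := by
    rw [hMpow]; field_simp; linarith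
  rw [← hMm] at hς
  refine (existsUnique_congr fun y => ?_).1 <| existsUnique_fixedPoint_of_sum_abs_sub_le
    (MLPPR.isClosed_Δ M) (x₀ := v) ⟨hv0, hv1.trans_le hM1⟩
    (MLPPR.mapsTo_phi hP0 hPs hv0 hv1 hα0 (by linarith) hMα) hς
    fun y hy z hz => MLPPR.sum_abs_phi_sub_le hP0 hPs hv0 hv1 hα0 (by linarith) hy hz
  simp only [MLPPR.Δ, Set.mem_ofPred_eq, and_assoc]
  exact and_congr_right fun hy => and_congr_right fun _ => MLPPR.phi_eq_self_iff hP0 hv1 hα0 hy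

theorem mlppr_uniqueness (n k : ℕ) (hn : 0 < n) (hk : 2 ≤ k)
    (P : Fin n → (Fin (k-1) → Fin n) → ℝ)
    (hP0 : ∀ i j, 0 ≤ P i j) (hPs : ∀ j, ∑ i, P i j ≤ 1)
    (v : Fin n → ℝ) (hv0 : ∀ i, 0 ≤ v i) (hv1 : ∑ i, v i = 1)
    (α : ℝ) (hα0 : 0 ≤ α) (hα1 : α < 1)
    (hς : (2*(k:ℝ)-3) * α * (1 - α) ^ (-((k:ℝ)-2)/((k:ℝ)-1)) < 1) :
    ∃! y : Fin n → ℝ, (∀ i, 0 ≤ y i) ∧ ∑ i, y i ≤ (1 - α) ^ (-(1:ℝ)/((k:ℝ)-1)) ∧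
      ∀ i, (∑ l, y l) ^ (k-2) * y i - α * contr P y i = v i :=
  mlppr_uniqueness_general n k hk P hP0 hPs v hv0 hv1 α hα0 hα1 hς
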